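/- arXiv:1804.03686 — 2 statements merged into one kernel-verified Lean document; each statement's English description precedes it below -/
import Mathlib

section
/- Let A be a centrosymmetric r×c matrix with entries in {0,1,−1}. Then the geometric grid class Geom(A) is rc-invariant, and moreover every permutation π of size n in Geom(A) is contained in some centrosymmetric permutation ρ of size 2n in Geom(A). -/
open Filter Topology

/-- `π` contains `σ` as a pattern. -/
def PermContains {n m : ℕ} (π : Equiv.Perm (Fin n)) (σ : Equiv.Perm (Fin m)) : Prop :=
  ∃ f : Fin m → Fin n, StrictMono f ∧ ∀ i j : Fin m, σ i < σ j ↔ π (f i) < π (f j)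

/-- A permutation class: downward closed under pattern containment. -/
def IsPermClass (C : ∀ n : ℕ, Set (Equiv.Perm (Fin n))) : Prop :=
  ∀ (m n : ℕ) (σ : Equiv.Perm (Fin m)) (π : Equiv.Perm (Fin n)),
    π ∈ C n → PermContains π σ → σ ∈ C m

/-- The reverse–complement of a permutation. -/
def rcPerm {n : ℕ} (π : Equiv.Perm (Fin n)) : Equiv.Perm (Fin n) :=
  (Fin.revPerm.trans π).trans Fin.revPerm

/-- A class is rc-invariant if `rc(C) = C`. -/
def RCInvariant (C : ∀ n : ℕ, Set (Equiv.Perm (Fin n))) : Prop :=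
  ∀ n : ℕ, rcPerm '' (C n) = C n

/-- `|C_n|`. -/
noncomputable def classCount (C : ∀ n : ℕ, Set (Equiv.Perm (Fin n))) (n : ℕ) : ℕ :=
  (C n).ncard

/-- `|C^rc_{2n}|`, the number of centrosymmetric permutations of size `2n` in `C`. -/
noncomputable def rcCount (C : ∀ n : ℕ, Set (Equiv.Perm (Fin n))) (n : ℕ) : ℕ :=
  {π ∈ C (2 * n) | rcPerm π = π}.ncard

/-- The sequence `n ↦ (f n)^(1/n)`, valued in `ℝ≥0∞`. -/
noncomputable def growthSeq (f : ℕ → ℕ) (n : ℕ) : ENNReal :=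
  (f n : ENNReal) ^ ((n : ℝ)⁻¹)

/-- The standard figure of a `{0,1,-1}`-matrix `A` (rows indexed from the bottom,
both rows and columns 0-indexed here). -/
def stdFigure {r c : ℕ} (A : Fin r → Fin c → ℤ) : Set (ℝ × ℝ) :=
  { p | ∃ (i : Fin r) (j : Fin c) (t : ℝ), 0 < t ∧ t < 1 ∧
      ((A i j = 1 ∧ p = ((j : ℝ) + t, (i : ℝ) + t)) ∨
       (A i j = -1 ∧ p = ((j : ℝ) + t, (i : ℝ) + 1 - t))) }

/-- `π` lies in the geometric grid class of `A`. -/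
def InGeom {r c n : ℕ} (A : Fin r → Fin c → ℤ) (π : Equiv.Perm (Fin n)) : Prop :=
  ∃ p : Fin n → ℝ × ℝ, (∀ k, p k ∈ stdFigure A) ∧
    StrictMono (fun k => (p k).1) ∧
    ∀ k l : Fin n, (p k).2 < (p l).2 ↔ π k < π l

/-- Two cells are related if both are nonzero, they share a row or a column, and no
nonzero cell lies strictly between them in that row or column. -/
def cellRel {r c : ℕ} (A : Fin r → Fin c → ℤ) (v w : Fin r × Fin c) : Prop :=
  A v.1 v.2 ≠ 0 ∧ A w.1 w.2 ≠ 0 ∧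
    ((v.1 = w.1 ∧ ∀ j : Fin c, min v.2 w.2 < j → j < max v.2 w.2 → A v.1 j = 0) ∨
     (v.2 = w.2 ∧ ∀ i : Fin r, min v.1 w.1 < i → i < max v.1 w.1 → A i v.2 = 0))

/-- The cell graph of `A`. -/
def cellGraph {r c : ℕ} (A : Fin r → Fin c → ℤ) : SimpleGraph (Fin r × Fin c) :=
  SimpleGraph.fromRel (cellRel A)

/-- The half-turn rotation acting on cells. -/
def cellRC {r c : ℕ} (v : Fin r × Fin c) : Fin r × Fin c :=
  (v.1.rev, v.2.rev)

/-!
The point reflection `(x, y) ↦ (c - x, r - y)` maps the standard figure of a centrosymmetric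
matrix onto itself, and reflecting a drawing of `π` yields a drawing of its reverse–complement.
For the second part, slide the points of a drawing of `π` along their segments by `ε (k + 1)`
for a small `ε ≠ 0`: this keeps the pattern and makes `x_k + x_l ≠ c` and `y_k + y_l ≠ r` for
all `k, l`. The drawing together with its reflection is then a point-symmetric set of `2n`
points in general position, whose pattern is centrosymmetric and contains `π`.
-/

open Function

/-- The points `p`, listed by increasing x-coordinate, have pattern `ρ`. -/
def Realizes {N : ℕ} (p : Fin N → ℝ × ℝ) (ρ : Equiv.Perm (Fin N)) : Prop :=
  StrictMono (fun k => (p k).1) ∧ ∀ k l, (p k).2 < (p l).2 ↔ ρ k < ρ l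

def rcPoint (a b : ℝ) (p : ℝ × ℝ) : ℝ × ℝ :=
  (a - p.1, b - p.2)

@[simp]
lemma rcPoint_rcPoint (a b : ℝ) (p : ℝ × ℝ) : rcPoint a b (rcPoint a b p) = p := by
  simp [rcPoint]

@[simp]
lemma rcPerm_rcPerm {n : ℕ} (π : Equiv.Perm (Fin n)) : rcPerm (rcPerm π) = π := by
  ext k
  simp [rcPerm]

lemma exists_perm_lt_iff_lt {N : ℕ} {α : Type*} [LinearOrder α] {f : Fin N → α}
    (hf : Injective f) : ∃ σ : Equiv.Perm (Fin N), ∀ k l, f k < f l ↔ σ k < σ l := by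
  have hsorted : StrictMono (f ∘ Tuple.sort f) :=
    (Tuple.monotone_sort f).strictMono_of_injective (hf.comp (Tuple.sort f).injective)
  refine ⟨(Tuple.sort f)⁻¹, fun k l => ?_⟩
  rw [← hsorted.lt_iff_lt]
  simp

lemma exists_realizes {ι : Type*} [Fintype ι] {N : ℕ} (hN : Fintype.card ι = N)
    {q : ι → ℝ × ℝ} (hx : Injective fun i => (q i).1) (hy : Injective fun i => (q i).2) :
    ∃ (e : Fin N ≃ ι) (ρ : Equiv.Perm (Fin N)), Realizes (q ∘ e) ρ := by
  set e₀ := (Fintype.equivFinOfCardEq hN).symm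
  obtain ⟨σ, hσ⟩ := exists_perm_lt_iff_lt (hx.comp e₀.injective)
  obtain ⟨ρ, hρ⟩ := exists_perm_lt_iff_lt (hy.comp (σ.symm.trans e₀).injective)
  refine ⟨σ.symm.trans e₀, ρ, fun k l hkl => ?_, hρ⟩
  simpa using (hσ (σ.symm k) (σ.symm l)).2 (by simpa using hkl)

namespace Realizes

variable {N M : ℕ} {p : Fin N → ℝ × ℝ} {ρ : Equiv.Perm (Fin N)}

lemma injective_snd (hp : Realizes p ρ) : Injective fun k => (p k).2 := by
  intro k l hkl
  by_contra hne
  rcases lt_or_gt_of_ne (ρ.injective.ne hne) with h | h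
  · exact (hp.2 k l).2 h |>.ne hkl
  · exact (hp.2 l k).2 h |>.ne' hkl

lemma rcPoint (hp : Realizes p ρ) (a b : ℝ) :
    Realizes (fun k => rcPoint a b (p k.rev)) (rcPerm ρ) := by
  refine ⟨fun k l hkl => ?_, fun k l => ?_⟩
  · have := hp.1 (Fin.rev_lt_rev.2 hkl)
    simp only [_root_.rcPoint]
    linarith
  · simp only [_root_.rcPoint, sub_lt_sub_iff_left, hp.2, rcPerm]
    simp [Fin.rev_lt_rev]

lemma unique {τ : Equiv.Perm (Fin N)} (hρ : Realizes p ρ) (hτ : Realizes p τ) : ρ = τ := by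
  have hmono : StrictMono fun a => τ (ρ⁻¹ a) := fun a b hab => by
    simpa [← hτ.2, hρ.2] using hab
  ext k
  simpa using congrArg Fin.val (hmono.apply_eq (x := ρ k)).symm

lemma strictMono_of_apply_eq {p' : Fin M → ℝ × ℝ} (hp : StrictMono fun k => (p k).1)
    (hp' : StrictMono fun m => (p' m).1) {f : Fin M → Fin N} (hf : ∀ m, p (f m) = p' m) :
    StrictMono f :=
  fun a b hab => hp.lt_iff_lt.1 (by simpa only [hf] using hp' hab)

lemma eq_of_forall_exists_eq {p' : Fin N → ℝ × ℝ} (hp : StrictMono fun k => (p k).1)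
    (hp' : StrictMono fun k => (p' k).1) (h : ∀ k, ∃ l, p l = p' k) : p' = p := by
  choose f hf using h
  have hid := (strictMono_of_apply_eq hp hp' hf).eq_id
  funext k
  rw [← hf k, hid, id]

lemma permContains {p' : Fin M → ℝ × ℝ} {σ : Equiv.Perm (Fin M)} (hp : Realizes p ρ)
    (hp' : Realizes p' σ) (h : ∀ m, ∃ k, p k = p' m) : PermContains ρ σ := by
  choose f hf using h
  exact ⟨f, strictMono_of_apply_eq hp.1 hp'.1 hf, fun i j => by rw [← hp'.2, ← hf, ← hf, hp.2]⟩

lemma rcPerm_eq_self (hp : Realizes p ρ) {a b : ℝ}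
    (h : ∀ k, ∃ l, p l = _root_.rcPoint a b (p k)) : rcPerm ρ = ρ := by
  have hrc := hp.rcPoint a b
  rw [eq_of_forall_exists_eq hp.1 hrc.1 fun k => h k.rev] at hrc
  exact hrc.unique hp

lemma of_lt_imp_lt {p' : Fin N → ℝ × ℝ} (hp : Realizes p ρ)
    (hx : ∀ k l, (p k).1 < (p l).1 → (p' k).1 < (p' l).1)
    (hy : ∀ k l, (p k).2 < (p l).2 → (p' k).2 < (p' l).2) : Realizes p' ρ := by
  refine ⟨fun k l hkl => hx k l (hp.1 hkl),
    fun k l => ⟨fun h => ?_, fun h => hy k l ((hp.2 k l).2 h)⟩⟩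
  rcases lt_trichotomy (ρ k) (ρ l) with hlt | heq | hgt
  · exact hlt
  · rw [ρ.injective heq] at h
    exact absurd h (lt_irrefl _)
  · exact absurd (hy l k ((hp.2 l k).2 hgt)) h.not_gt

end Realizes

section Figure

variable {r c : ℕ} {A : Fin r → Fin c → ℤ}

lemma cast_rev {m : ℕ} (i : Fin m) : ((i.rev : ℕ) : ℝ) = m - 1 - i := by
  rw [Fin.val_rev, Nat.cast_sub i.2]
  push_cast
  ring

lemma rcPoint_mem_stdFigure (hsym : ∀ i j, A i j = A i.rev j.rev) {p : ℝ × ℝ}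
    (hp : p ∈ stdFigure A) : rcPoint c r p ∈ stdFigure A := by
  obtain ⟨i, j, t, ht0, ht1, hp⟩ := hp
  refine ⟨i.rev, j.rev, 1 - t, by linarith, by linarith, ?_⟩
  rw [← hsym, cast_rev, cast_rev]
  rcases hp with ⟨hA, rfl⟩ | ⟨hA, rfl⟩
  · exact .inl ⟨hA, by simp only [rcPoint, Prod.mk.injEq]; constructor <;> ring⟩
  · exact .inr ⟨hA, by simp only [rcPoint, Prod.mk.injEq]; constructor <;> ring⟩

lemma InGeom.rcPerm (hsym : ∀ i j, A i j = A i.rev j.rev) {n : ℕ} {π : Equiv.Perm (Fin n)}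
    (h : InGeom A π) : InGeom A (rcPerm π) :=
  let ⟨p, hmem, (hp : Realizes p π)⟩ := h
  ⟨fun k => rcPoint c r (p k.rev), fun k => rcPoint_mem_stdFigure hsym (hmem k.rev),
    hp.rcPoint c r⟩

lemma exists_slope_eventually_mem {p : ℝ × ℝ} (hp : p ∈ stdFigure A) :
    ∃ s : ℝ, (s = 1 ∨ s = -1) ∧ ∀ᶠ δ in 𝓝 (0 : ℝ), (p.1 + δ, p.2 + s * δ) ∈ stdFigure A := by
  obtain ⟨i, j, t, ht0, ht1, hp⟩ := hp
  have hδ : ∀ᶠ δ in 𝓝 (0 : ℝ), δ ∈ Set.Ioo (-t) (1 - t) :=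
    Ioo_mem_nhds (by linarith) (by linarith)
  rcases hp with ⟨hA, rfl⟩ | ⟨hA, rfl⟩
  · refine ⟨1, .inl rfl, hδ.mono fun δ hδ => ⟨i, j, t + δ, ?_, ?_, .inl ⟨hA, ?_⟩⟩⟩
    all_goals simp only [Set.mem_Ioo, Prod.mk.injEq] at hδ ⊢
    all_goals first | linarith | constructor <;> ring
  · refine ⟨-1, .inr rfl, hδ.mono fun δ hδ => ⟨i, j, t + δ, ?_, ?_, .inr ⟨hA, ?_⟩⟩⟩
    all_goals simp only [Set.mem_Ioo, Prod.mk.injEq] at hδ ⊢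
    all_goals first | linarith | constructor <;> ring

lemma eventually_add_mul_lt {u u' : ℝ} (h : u < u') (v v' : ℝ) :
    ∀ᶠ ε in 𝓝 (0 : ℝ), u + ε * v < u' + ε * v' :=
  ContinuousAt.eventually_lt (by fun_prop) (by fun_prop) (by simpa using h)

lemma eventually_add_mul_ne (u a : ℝ) {v : ℝ} (hv : v ≠ 0) :
    ∀ᶠ ε in 𝓝[≠] (0 : ℝ), u + ε * v ≠ a := by
  by_cases hu : u = a
  · filter_upwards [self_mem_nhdsWithin] with ε hε
    simpa [hu] using And.intro hε hv
  · have hcont : ∀ᶠ ε in 𝓝 (0 : ℝ), u + ε * v ≠ a :=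
      ContinuousAt.eventually_ne (by fun_prop) (by simpa using hu)
    exact nhdsWithin_le_nhds hcont

lemma eventually_forall_lt_imp_add_mul_lt {ι : Type*} [Finite ι] (u v : ι → ℝ) :
    ∀ᶠ ε in 𝓝 (0 : ℝ), ∀ k l, u k < u l → u k + ε * v k < u l + ε * v l := by
  refine eventually_all.2 fun k => eventually_all.2 fun l => ?_
  by_cases hkl : u k < u l
  · exact (eventually_add_mul_lt hkl (v k) (v l)).mono fun ε h _ => h
  · exact .of_forall fun ε h => absurd h hkl

lemma InGeom.exists_generic {n : ℕ} {π : Equiv.Perm (Fin n)} (h : InGeom A π) (a b : ℝ) :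
    ∃ p : Fin n → ℝ × ℝ, (∀ k, p k ∈ stdFigure A) ∧ Realizes p π ∧
      ∀ k l, (p k).1 + (p l).1 ≠ a ∧ (p k).2 + (p l).2 ≠ b := by
  obtain ⟨p, hmem, hp : Realizes p π⟩ := h
  choose s hs hslide using fun k => exists_slope_eventually_mem (hmem k)
  set w : Fin n → ℝ := fun k => (k : ℝ) + 1
  have hw : ∀ k, 0 < w k := fun k => by positivity
  have hwinj : Injective w := fun k l h => Fin.val_injective (by simpa [w] using h)
  -- Opposite slopes only occur for distinct points, whose weights differ.
  have hslope : ∀ k l, s k * w k + s l * w l ≠ 0 := by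
    intro k l h
    rcases hs k with hk | hk <;> rcases hs l with hl | hl <;> rw [hk, hl] at h
    · linarith [hw k, hw l]
    · obtain rfl := hwinj (by linarith : w k = w l)
      linarith
    · obtain rfl := hwinj (by linarith : w k = w l)
      linarith
    · linarith [hw k, hw l]
  set P : ℝ → Fin n → ℝ × ℝ := fun ε k => ((p k).1 + ε * w k, (p k).2 + ε * (s k * w k))
  have hmemP : ∀ᶠ ε in 𝓝 (0 : ℝ), ∀ k, P ε k ∈ stdFigure A := by
    refine eventually_all.2 fun k => ?_
    have hδ : Tendsto (fun ε => ε * w k) (𝓝 (0 : ℝ)) (𝓝 0) := by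
      simpa using (tendsto_id (x := 𝓝 (0 : ℝ))).mul_const (w k)
    filter_upwards [hδ.eventually (hslide k)] with ε hε
    convert hε using 3
    ring
  have hx := eventually_forall_lt_imp_add_mul_lt (fun k => (p k).1) w
  have hy := eventually_forall_lt_imp_add_mul_lt (fun k => (p k).2) (fun k => s k * w k)
  have hgx : ∀ᶠ ε in 𝓝[≠] (0 : ℝ), ∀ k l, (P ε k).1 + (P ε l).1 ≠ a := by
    refine eventually_all.2 fun k => eventually_all.2 fun l => ?_
    filter_upwards [eventually_add_mul_ne ((p k).1 + (p l).1) a (add_pos (hw k) (hw l)).ne']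
      with ε hε
    convert hε using 1
    ring
  have hgy : ∀ᶠ ε in 𝓝[≠] (0 : ℝ), ∀ k l, (P ε k).2 + (P ε l).2 ≠ b := by
    refine eventually_all.2 fun k => eventually_all.2 fun l => ?_
    filter_upwards [eventually_add_mul_ne ((p k).2 + (p l).2) b (hslope k l)] with ε hε
    convert hε using 1
    ring
  obtain ⟨ε, ⟨hmemε, hxε, hyε⟩, hgxε, hgyε⟩ := ((hmemP.and (hx.and hy)).filter_mono
    nhdsWithin_le_nhds |>.and (hgx.and hgy)).exists
  exact ⟨P ε, hmemε, hp.of_lt_imp_lt hxε hyε, fun k l => ⟨hgxε k l, hgyε k l⟩⟩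

lemma exists_centrosymmetric_of_generic (hsym : ∀ i j, A i j = A i.rev j.rev) {n : ℕ}
    {π : Equiv.Perm (Fin n)} {p : Fin n → ℝ × ℝ} (hmem : ∀ k, p k ∈ stdFigure A)
    (hp : Realizes p π) (hgen : ∀ k l, (p k).1 + (p l).1 ≠ c ∧ (p k).2 + (p l).2 ≠ r) :
    ∃ ρ : Equiv.Perm (Fin (2 * n)), InGeom A ρ ∧ rcPerm ρ = ρ ∧ PermContains ρ π := by
  set q : Fin n ⊕ Fin n → ℝ × ℝ := Sum.elim p fun k => rcPoint c r (p k)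
  have hx : Injective fun i => (q i).1 := by
    rintro (k | k) (l | l) h <;> simp only [q, Sum.elim_inl, Sum.elim_inr, rcPoint] at h
    · exact congrArg _ (hp.1.injective h)
    · exact absurd (by linarith) (hgen k l).1
    · exact absurd (by linarith) (hgen l k).1
    · exact congrArg _ (hp.1.injective (by linarith))
  have hy : Injective fun i => (q i).2 := by
    rintro (k | k) (l | l) h <;> simp only [q, Sum.elim_inl, Sum.elim_inr, rcPoint] at h
    · exact congrArg _ (hp.injective_snd h)
    · exact absurd (by linarith) (hgen k l).2
    · exact absurd (by linarith) (hgen l k).2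
    · exact congrArg _ (hp.injective_snd (by linarith))
  have hqmem : ∀ i, q i ∈ stdFigure A := by
    rintro (k | k)
    exacts [hmem k, rcPoint_mem_stdFigure hsym (hmem k)]
  have hqsymm : ∀ i, ∃ j, q j = rcPoint c r (q i) := by
    rintro (k | k)
    exacts [⟨.inr k, rfl⟩, ⟨.inl k, by simp [q]⟩]
  obtain ⟨e, ρ, hρ⟩ := exists_realizes (N := 2 * n) (by simp [two_mul]) hx hy
  refine ⟨ρ, ⟨q ∘ e, fun k => hqmem (e k), hρ⟩, hρ.rcPerm_eq_self (a := c) (b := r) fun k => ?_,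
    hρ.permContains hp fun m => ⟨e.symm (.inl m), by simp [q]⟩⟩
  obtain ⟨j, hj⟩ := hqsymm (e k)
  exact ⟨e.symm j, by simpa using hj⟩

end Figure

theorem stmt6_general (r c : ℕ) (A : Fin r → Fin c → ℤ)
    (hsym : ∀ i j, A i j = A i.rev j.rev) :
    (∀ (n : ℕ) (π : Equiv.Perm (Fin n)), InGeom A π ↔ InGeom A (rcPerm π)) ∧
    (∀ (n : ℕ) (π : Equiv.Perm (Fin n)), InGeom A π →
      ∃ ρ : Equiv.Perm (Fin (2 * n)), InGeom A ρ ∧ rcPerm ρ = ρ ∧ PermContains ρ π) := by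
  refine ⟨fun n π => ⟨InGeom.rcPerm hsym, fun h => ?_⟩, fun n π hπ => ?_⟩
  · simpa using h.rcPerm hsym
  · obtain ⟨p, hmem, hp, hgen⟩ := hπ.exists_generic c r
    exact exists_centrosymmetric_of_generic hsym hmem hp hgen

theorem stmt6 (r c : ℕ) (A : Fin r → Fin c → ℤ)
    (hentries : ∀ i j, A i j = 0 ∨ A i j = 1 ∨ A i j = -1)
    (hsym : ∀ i j, A i j = A i.rev j.rev) :
    (∀ (n : ℕ) (π : Equiv.Perm (Fin n)), InGeom A π ↔ InGeom A (rcPerm π)) ∧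
    (∀ (n : ℕ) (π : Equiv.Perm (Fin n)), InGeom A π →
      ∃ ρ : Equiv.Perm (Fin (2 * n)), InGeom A ρ ∧ rcPerm ρ = ρ ∧ PermContains ρ π) :=
  stmt6_general r c A hsym
end

section
/- Let C be a sum closed, rc-invariant permutation class. Set a_n = |C_n|, b_n = |C^rc_{2n}|, and d_k = |ind(C)^rc_{2k}| (the number of centrosymmetric sum-indecomposable permutations of size 2k in C). Then for all n ≥ 0: b_n = a_n + Σ_{k=1}^{n} a_{n−k} · d_k. -/
open Filter Topology

/-- The direct sum `σ ⊕ τ` of two permutations. -/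
def sumPerm {a b : ℕ} (σ : Equiv.Perm (Fin a)) (τ : Equiv.Perm (Fin b)) :
    Equiv.Perm (Fin (a + b)) :=
  (finSumFinEquiv.symm.trans (Equiv.sumCongr σ τ)).trans finSumFinEquiv

/-- A class is sum closed if it is closed under `⊕`. -/
def SumClosed (C : ∀ n : ℕ, Set (Equiv.Perm (Fin n))) : Prop :=
  ∀ (a b : ℕ) (σ : Equiv.Perm (Fin a)) (τ : Equiv.Perm (Fin b)),
    σ ∈ C a → τ ∈ C b → sumPerm σ τ ∈ C (a + b)

/-- Transport a permutation along an equality of sizes. -/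
def permCast {m n : ℕ} (h : m = n) (π : Equiv.Perm (Fin m)) : Equiv.Perm (Fin n) :=
  ((finCongr h).symm.trans π).trans (finCongr h)

/-- A permutation is sum-indecomposable if it is not the sum of two permutations of
nonzero size. -/
def SumIndecomposable {n : ℕ} (π : Equiv.Perm (Fin n)) : Prop :=
  ¬ ∃ (a b : ℕ) (σ : Equiv.Perm (Fin a)) (τ : Equiv.Perm (Fin b)) (h : a + b = n),
      0 < a ∧ 0 < b ∧ π = permCast h (sumPerm σ τ)

/-- `|ind(C)_n|`, the number of sum-indecomposable permutations of size `n` in `C`. -/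
noncomputable def indCount (C : ∀ n : ℕ, Set (Equiv.Perm (Fin n))) (n : ℕ) : ℕ :=
  {π ∈ C n | SumIndecomposable π}.ncard

/-- `|ind(C)^rc_{2k}|`, the number of centrosymmetric sum-indecomposable permutations of
size `2k` in `C`. -/
noncomputable def indRcCount (C : ∀ n : ℕ, Set (Equiv.Perm (Fin n))) (k : ℕ) : ℕ :=
  {π ∈ C (2 * k) | SumIndecomposable π ∧ rcPerm π = π}.ncard

/-!
Say that `π` splits at `c` if it maps `{0, …, c-1}` onto itself, i.e. `π = σ ⊕ τ` with `|σ| = c`.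
A centrosymmetric `π` of size `2n` splits at `c` iff it splits at `2n - c`. Taking `n - k` to be
the largest split point `≤ n`, `π` also splits at `n + k`, so `π = α ⊕ μ ⊕ rc(α)` with
`|α| = n - k` and `μ` centrosymmetric of size `2k`. By maximality `μ` is sum-indecomposable: a split
of `μ` at `c` would make `π` split at `n - k + c` and at `n + k - c`, one of which lies in
`(n - k, n]`. Conversely `(α, μ) ↦ α ⊕ μ ⊕ rc(α)` is injective on such pairs (the largest split
point recovers `k`), and lands in `C` since `C` is sum closed and rc-invariant. The term `k = 0`,
with `μ` the empty permutation, contributes `a_n`.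
-/

open Equiv

section Blocks

variable {N : ℕ}

def SplitsAt (π : Perm (Fin N)) (c : ℕ) : Prop :=
  ∀ i : Fin N, (i : ℕ) < c → (π i : ℕ) < c

lemma SplitsAt.zero (π : Perm (Fin N)) : SplitsAt π 0 :=
  fun _ hi => absurd hi (Nat.not_lt_zero _)

lemma SplitsAt.of_le (π : Perm (Fin N)) {c : ℕ} (hc : N ≤ c) : SplitsAt π c :=
  fun i _ => (π i).isLt.trans_le hc

lemma SplitsAt.symm {π : Perm (Fin N)} {c : ℕ} (h : SplitsAt π c) : SplitsAt π.symm c := by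
  intro i hi
  let s : Set (Fin N) := {j | (j : ℕ) < c}
  have hbij : Set.BijOn π s s := (s.toFinite.injOn_iff_bijOn_of_mapsTo h).1 π.injective.injOn
  obtain ⟨j, hj, rfl⟩ := hbij.surjOn hi
  simpa [s] using hj

lemma SplitsAt.le_apply {π : Perm (Fin N)} {c : ℕ} (h : SplitsAt π c) {i : Fin N}
    (hi : c ≤ (i : ℕ)) : c ≤ (π i : ℕ) := by
  by_contra! hlt
  have := h.symm (π i) hlt
  simp only [symm_apply_apply] at this
  omega

lemma rcPerm_apply_val (π : Perm (Fin N)) (i j : Fin N) (h : (i : ℕ) + j + 1 = N) :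
    (rcPerm π i : ℕ) + π j + 1 = N := by
  have hj : i.rev = j := Fin.ext (by rw [Fin.val_rev]; omega)
  have := (π j).isLt
  simp only [rcPerm, trans_apply, Fin.revPerm_apply, Fin.val_rev, hj]
  omega

lemma val_add_val_of_rcPerm_eq {π : Perm (Fin N)} (hπ : rcPerm π = π) (i j : Fin N)
    (h : (i : ℕ) + j + 1 = N) : (π i : ℕ) + π j + 1 = N := by
  simpa only [hπ] using rcPerm_apply_val π i j h

lemma SplitsAt.rcPerm {π : Perm (Fin N)} {c d : ℕ} (h : SplitsAt π c) (hcd : c + d = N) :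
    SplitsAt (rcPerm π) d := by
  intro i hi
  have h1 := rcPerm_apply_val π i i.rev (by rw [Fin.val_rev]; omega)
  have h2 := h.le_apply (i := i.rev) (by rw [Fin.val_rev]; omega)
  omega

lemma permCast_apply_val {m n : ℕ} (h : m = n) (π : Perm (Fin m)) (i : Fin n) (j : Fin m)
    (hij : (i : ℕ) = j) : (permCast h π i : ℕ) = π j := by
  subst h
  simp [permCast, Fin.ext hij]

lemma permCast_mem {C : ∀ n : ℕ, Set (Perm (Fin n))} {m n : ℕ} (h : m = n)
    {π : Perm (Fin m)} (hπ : π ∈ C m) : permCast h π ∈ C n := by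
  subst h
  simpa [permCast] using hπ

lemma sumPerm_apply_val_of_lt {a b : ℕ} (σ : Perm (Fin a)) (τ : Perm (Fin b))
    (i : Fin (a + b)) (j : Fin a) (h : (i : ℕ) = j) : (sumPerm σ τ i : ℕ) = σ j := by
  obtain rfl : i = Fin.castAdd b j := Fin.ext h
  simp [sumPerm]

lemma sumPerm_apply_val_of_eq_add {a b : ℕ} (σ : Perm (Fin a)) (τ : Perm (Fin b))
    (i : Fin (a + b)) (j : Fin b) (h : (i : ℕ) = a + j) : (sumPerm σ τ i : ℕ) = a + τ j := by
  obtain rfl : i = Fin.natAdd a j := Fin.ext h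
  simp [sumPerm]

def restrictBlockFun (π : Perm (Fin N)) {a m : ℕ} (hN : a + m ≤ N) (hm : SplitsAt π (a + m))
    (i : Fin m) : Fin m :=
  ⟨π (Fin.castLE hN (Fin.natAdd a i)) - a, by
    have := hm (Fin.castLE hN (Fin.natAdd a i)) (by simp)
    have := i.isLt
    omega⟩

lemma restrictBlockFun_val (π : Perm (Fin N)) {a m : ℕ} (hN : a + m ≤ N)
    (hm : SplitsAt π (a + m)) (i : Fin m) :
    (restrictBlockFun π hN hm i : ℕ) = π (Fin.castLE hN (Fin.natAdd a i)) - a :=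
  rfl

lemma castLE_natAdd_restrictBlockFun {π : Perm (Fin N)} {a m : ℕ} (hN : a + m ≤ N)
    (ha : SplitsAt π a) (hm : SplitsAt π (a + m)) (i : Fin m) :
    Fin.castLE hN (Fin.natAdd a (restrictBlockFun π hN hm i)) =
      π (Fin.castLE hN (Fin.natAdd a i)) :=
  Fin.ext (Nat.add_sub_cancel' (ha.le_apply (by simp)))

lemma restrictBlockFun_symm_apply {π : Perm (Fin N)} {a m : ℕ} (hN : a + m ≤ N)
    (ha : SplitsAt π a) (hm : SplitsAt π (a + m)) (i : Fin m) :
    restrictBlockFun π.symm hN hm.symm (restrictBlockFun π hN hm i) = i := by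
  ext
  rw [restrictBlockFun_val, castLE_natAdd_restrictBlockFun hN ha hm, symm_apply_apply]
  simp

/-- The restriction of `π` to the block `[a, a + m)`. -/
def restrictBlock (π : Perm (Fin N)) {a m : ℕ} (hN : a + m ≤ N) (ha : SplitsAt π a)
    (hm : SplitsAt π (a + m)) : Perm (Fin m) where
  toFun := restrictBlockFun π hN hm
  invFun := restrictBlockFun π.symm hN hm.symm
  left_inv := restrictBlockFun_symm_apply hN ha hm
  right_inv i := by simpa using restrictBlockFun_symm_apply hN ha.symm hm.symm i

lemma restrictBlock_apply_val {π : Perm (Fin N)} {a m : ℕ} (hN : a + m ≤ N)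
    (ha : SplitsAt π a) (hm : SplitsAt π (a + m)) (i : Fin m) (x : Fin N)
    (hx : (x : ℕ) = a + i) :
    a + (restrictBlock π hN ha hm i : ℕ) = π x := by
  obtain rfl : x = Fin.castLE hN (Fin.natAdd a i) := Fin.ext (by simpa using hx)
  exact congrArg Fin.val (castLE_natAdd_restrictBlockFun hN ha hm i)

section restrictBlock

variable {π : Perm (Fin N)} {a m : ℕ} {hN : a + m ≤ N} {ha : SplitsAt π a}
  {hm : SplitsAt π (a + m)}

lemma permContains_restrictBlock : PermContains π (restrictBlock π hN ha hm) := by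
  refine ⟨fun i => Fin.castLE hN (Fin.natAdd a i), fun i j hij => by simpa using hij,
    fun i j => ?_⟩
  have hi := restrictBlock_apply_val hN ha hm i (Fin.castLE hN (Fin.natAdd a i)) (by simp)
  have hj := restrictBlock_apply_val hN ha hm j (Fin.castLE hN (Fin.natAdd a j)) (by simp)
  simp only [Fin.lt_def]
  omega

lemma SplitsAt.of_restrictBlock {c : ℕ} (h : SplitsAt (restrictBlock π hN ha hm) c)
    (hc : c ≤ m) : SplitsAt π (a + c) := by
  intro i hi
  rcases lt_or_ge (i : ℕ) a with hia | hia
  · exact (ha i hia).trans_le (Nat.le_add_right a c)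
  · have hj : (i : ℕ) - a < m := by omega
    have h1 := h ⟨i - a, hj⟩ (by simp; omega)
    have h2 := restrictBlock_apply_val hN ha hm ⟨i - a, hj⟩ i (by simp; omega)
    omega

lemma rcPerm_restrictBlock (hπ : rcPerm π = π) (hN' : a + m + a = N) :
    rcPerm (restrictBlock π hN ha hm) = restrictBlock π hN ha hm := by
  ext j
  have hjr : (j.rev : ℕ) = m - 1 - j := by rw [Fin.val_rev]; omega
  have h1 := rcPerm_apply_val (restrictBlock π hN ha hm) j j.rev (by omega)
  have h2 := restrictBlock_apply_val hN ha hm j ⟨a + j, by omega⟩ rfl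
  have h3 := restrictBlock_apply_val hN ha hm j.rev ⟨a + j.rev, by omega⟩ rfl
  have h4 := val_add_val_of_rcPerm_eq hπ ⟨a + j, by omega⟩ ⟨a + j.rev, by omega⟩
    (by simp only; omega)
  omega

end restrictBlock

lemma eq_permCast_sumPerm_of_splitsAt {π : Perm (Fin N)} {c : ℕ} (h : SplitsAt π c)
    (hc : c ≤ N) :
    π = permCast (Nat.add_sub_cancel' hc)
      (sumPerm (restrictBlock π (a := 0) (by omega) (SplitsAt.zero π) (by rwa [zero_add]))
        (restrictBlock π (a := c) (m := N - c) (by omega) h (SplitsAt.of_le π (by omega)))) := by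
  ext i
  rw [permCast_apply_val (m := c + (N - c)) _ _ i ⟨i, by omega⟩ rfl]
  rcases lt_or_ge (i : ℕ) c with hic | hic
  · rw [sumPerm_apply_val_of_lt _ _ _ ⟨i, hic⟩ rfl]
    have := restrictBlock_apply_val (by omega) (SplitsAt.zero π) (by rwa [zero_add]) ⟨i, hic⟩ i
      (by simp)
    omega
  · have hj : (i : ℕ) - c < N - c := by omega
    rw [sumPerm_apply_val_of_eq_add _ _ _ ⟨i - c, hj⟩ (by simp; omega)]
    have := restrictBlock_apply_val (by omega) h (SplitsAt.of_le π (by omega)) ⟨i - c, hj⟩ i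
      (by simp; omega)
    omega

lemma sumIndecomposable_iff_forall_not_splitsAt {π : Perm (Fin N)} :
    SumIndecomposable π ↔ ∀ c, 0 < c → c < N → ¬ SplitsAt π c := by
  constructor
  · intro hπ c hc0 hcN hc
    exact hπ ⟨c, N - c, _, _, _, hc0, by omega, eq_permCast_sumPerm_of_splitsAt hc hcN.le⟩
  · rintro h ⟨a, b, σ, τ, rfl, ha, hb, rfl⟩
    refine h a ha (by omega) fun i hi => ?_
    rw [permCast_apply_val _ _ i ⟨i, by omega⟩ rfl,
      sumPerm_apply_val_of_lt σ τ _ ⟨i, hi⟩ rfl]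
    exact (σ _).isLt

end Blocks

section rcSum

variable {n k : ℕ}

def rcSum (hk : k ≤ n) (α : Perm (Fin (n - k))) (μ : Perm (Fin (2 * k))) :
    Perm (Fin (2 * n)) :=
  permCast (by omega) (sumPerm (sumPerm α μ) (rcPerm α))

variable (hk : k ≤ n) (α : Perm (Fin (n - k))) (μ : Perm (Fin (2 * k)))

lemma rcSum_apply_val_of_eq (i : Fin (2 * n)) (j : Fin (n - k)) (h : (i : ℕ) = j) :
    (rcSum hk α μ i : ℕ) = α j := by
  rw [rcSum, permCast_apply_val (m := n - k + 2 * k + (n - k)) _ _ i ⟨i, by omega⟩ rfl,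
    sumPerm_apply_val_of_lt _ _ _ (Fin.castAdd _ j) h, sumPerm_apply_val_of_lt _ _ _ j rfl]

lemma rcSum_apply_val_of_eq_add (i : Fin (2 * n)) (j : Fin (2 * k)) (h : (i : ℕ) = n - k + j) :
    (rcSum hk α μ i : ℕ) = n - k + μ j := by
  rw [rcSum, permCast_apply_val (m := n - k + 2 * k + (n - k)) _ _ i ⟨i, by omega⟩ rfl,
    sumPerm_apply_val_of_lt _ _ _ (Fin.natAdd _ j) h, sumPerm_apply_val_of_eq_add _ _ _ j rfl]

lemma rcSum_apply_val_add (i : Fin (2 * n)) (j : Fin (n - k)) (h : (i : ℕ) + j + 1 = 2 * n) :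
    (rcSum hk α μ i : ℕ) + α j + 1 = 2 * n := by
  have hjr : (j.rev : ℕ) + j + 1 = n - k := by rw [Fin.val_rev]; omega
  rw [rcSum, permCast_apply_val (m := n - k + 2 * k + (n - k)) _ _ i ⟨i, by omega⟩ rfl,
    sumPerm_apply_val_of_eq_add _ _ _ j.rev (by simp only; omega)]
  have := rcPerm_apply_val α j.rev j hjr
  omega

lemma rcSum_mem {C : ∀ n : ℕ, Set (Perm (Fin n))} (hsum : SumClosed C) (hrc : RCInvariant C)
    {α : Perm (Fin (n - k))} {μ : Perm (Fin (2 * k))} (hα : α ∈ C (n - k))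
    (hμ : μ ∈ C (2 * k)) : rcSum hk α μ ∈ C (2 * n) :=
  permCast_mem _ (hsum _ _ _ _ (hsum _ _ _ _ hα hμ) (hrc (n - k) ▸ Set.mem_image_of_mem _ hα))

lemma rcPerm_rcSum {μ : Perm (Fin (2 * k))} (hμ : rcPerm μ = μ) :
    rcPerm (rcSum hk α μ) = rcSum hk α μ := by
  ext i
  have hir : (i.rev : ℕ) + i + 1 = 2 * n := by rw [Fin.val_rev]; omega
  have h := rcPerm_apply_val (rcSum hk α μ) i i.rev (by omega)
  rcases lt_or_ge (i : ℕ) (n - k) with h1 | h1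
  · have := rcSum_apply_val_add hk α μ i.rev ⟨i, h1⟩ hir
    have := rcSum_apply_val_of_eq hk α μ i ⟨i, h1⟩ rfl
    omega
  rcases lt_or_ge (i : ℕ) (n + k) with h2 | h2
  · have hj : (i : ℕ) - (n - k) < 2 * k := by omega
    have hj' : 2 * k - 1 - ((i : ℕ) - (n - k)) < 2 * k := by omega
    have := rcSum_apply_val_of_eq_add hk α μ i ⟨_, hj⟩ (by simp only; omega)
    have := rcSum_apply_val_of_eq_add hk α μ i.rev ⟨_, hj'⟩ (by simp only; omega)
    have := val_add_val_of_rcPerm_eq hμ ⟨_, hj⟩ ⟨_, hj'⟩ (by simp only; omega)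
    omega
  · have hj : (i.rev : ℕ) < n - k := by omega
    have := rcSum_apply_val_of_eq hk α μ i.rev ⟨_, hj⟩ rfl
    have := rcSum_apply_val_add hk α μ i ⟨_, hj⟩ (by simp only; omega)
    omega

lemma splitsAt_rcSum : SplitsAt (rcSum hk α μ) (n - k) := fun i hi => by
  rw [rcSum_apply_val_of_eq hk α μ i ⟨i, hi⟩ rfl]
  exact (α _).isLt

lemma not_splitsAt_rcSum {μ : Perm (Fin (2 * k))} (hμ : SumIndecomposable μ) {s : ℕ}
    (hs : n - k < s) (hsn : s ≤ n) : ¬ SplitsAt (rcSum hk α μ) s := by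
  intro h
  refine sumIndecomposable_iff_forall_not_splitsAt.1 hμ (s - (n - k)) (by omega) (by omega) ?_
  intro j hj
  have h1 := rcSum_apply_val_of_eq_add hk α μ ⟨n - k + j, by omega⟩ j rfl
  have h2 := h ⟨n - k + j, by omega⟩ (by simp only; omega)
  omega

lemma rcSum_injective {α α' : Perm (Fin (n - k))} {μ μ' : Perm (Fin (2 * k))}
    (h : rcSum hk α μ = rcSum hk α' μ') : α = α' ∧ μ = μ' := by
  constructor
  · ext j
    have h1 := rcSum_apply_val_of_eq hk α μ ⟨j, by omega⟩ j rfl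
    have h2 := rcSum_apply_val_of_eq hk α' μ' ⟨j, by omega⟩ j rfl
    rw [h] at h1
    omega
  · ext j
    have h1 := rcSum_apply_val_of_eq_add hk α μ ⟨n - k + j, by omega⟩ j rfl
    have h2 := rcSum_apply_val_of_eq_add hk α' μ' ⟨n - k + j, by omega⟩ j rfl
    rw [h] at h1
    omega

lemma le_of_rcSum_eq {k' : ℕ} (hk' : k' ≤ n) {α' : Perm (Fin (n - k'))}
    {μ' : Perm (Fin (2 * k'))} (hμ' : SumIndecomposable μ')
    (h : rcSum hk α μ = rcSum hk' α' μ') : k' ≤ k := by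
  by_contra! hlt
  exact not_splitsAt_rcSum hk' α' hμ' (s := n - k) (by omega) (by omega)
    (h ▸ splitsAt_rcSum hk α μ)

end rcSum

lemma rcSum_restrictBlock {n k : ℕ} {π : Perm (Fin (2 * n))} (hπ : rcPerm π = π)
    (hk : k ≤ n) (h : SplitsAt π (n - k)) (h' : SplitsAt π (n - k + 2 * k)) :
    rcSum hk (restrictBlock π (a := 0) (by omega) (SplitsAt.zero π) (by rwa [zero_add]))
      (restrictBlock π (by omega) h h') = π := by
  ext i
  rcases lt_or_ge (i : ℕ) (n - k) with h1 | h1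
  · rw [rcSum_apply_val_of_eq hk _ _ i ⟨i, h1⟩ rfl]
    have := restrictBlock_apply_val (by omega) (SplitsAt.zero π) (by rwa [zero_add]) ⟨i, h1⟩ i
      (by simp)
    omega
  rcases lt_or_ge (i : ℕ) (n + k) with h2 | h2
  · have hj : (i : ℕ) - (n - k) < 2 * k := by omega
    rw [rcSum_apply_val_of_eq_add hk _ _ i ⟨_, hj⟩ (by simp only; omega)]
    exact restrictBlock_apply_val (by omega) h h' ⟨_, hj⟩ i (by simp only; omega)
  · have hir : (i.rev : ℕ) + i + 1 = 2 * n := by rw [Fin.val_rev]; omega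
    have hj : (i.rev : ℕ) < n - k := by omega
    have h3 := rcSum_apply_val_add hk
      (restrictBlock π (a := 0) (by omega) (SplitsAt.zero π) (by rwa [zero_add]))
      (restrictBlock π (by omega) h h') i ⟨_, hj⟩ (by simp only; omega)
    have h4 := restrictBlock_apply_val (by omega) (SplitsAt.zero π) (by rwa [zero_add])
      ⟨_, hj⟩ i.rev (by simp)
    have h5 := val_add_val_of_rcPerm_eq hπ i i.rev (by omega)
    omega

lemma exists_rcSum_eq {C : ∀ n : ℕ, Set (Perm (Fin n))} (hC : IsPermClass C) {n : ℕ}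
    {π : Perm (Fin (2 * n))} (hπC : π ∈ C (2 * n)) (hπ : rcPerm π = π) :
    ∃ k, ∃ hk : k ≤ n, ∃ α ∈ C (n - k),
      ∃ μ ∈ {μ ∈ C (2 * k) | SumIndecomposable μ ∧ rcPerm μ = μ}, rcSum hk α μ = π := by
  classical
  set k := n - Nat.findGreatest (SplitsAt π) n
  have hk : k ≤ n := Nat.sub_le n _
  have hsplit : SplitsAt π (n - k) := by
    rw [Nat.sub_sub_self (Nat.findGreatest_le n)]
    exact Nat.findGreatest_spec (Nat.zero_le n) (SplitsAt.zero π)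
  have hmax : ∀ s, n - k < s → s ≤ n → ¬ SplitsAt π s := fun s hs hsn =>
    Nat.findGreatest_is_greatest (by omega) hsn
  have hsplit' : SplitsAt π (n - k + 2 * k) := hπ ▸ hsplit.rcPerm (by omega)
  set μ := restrictBlock π (by omega) hsplit hsplit'
  have hμ : SumIndecomposable μ := by
    refine sumIndecomposable_iff_forall_not_splitsAt.2 fun c hc0 hck hc => ?_
    have hπc : SplitsAt π (n - k + c) :=
      SplitsAt.of_restrictBlock (ha := hsplit) (hm := hsplit') hc hck.le
    rcases le_or_gt (n - k + c) n with hcn | hcn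
    · exact hmax _ (by omega) hcn hπc
    · exact hmax (n - k + (2 * k - c)) (by omega) (by omega) (hπ ▸ hπc.rcPerm (by omega))
  refine ⟨k, hk, _, hC _ _ _ _ hπC permContains_restrictBlock, μ,
    ⟨hC _ _ _ _ hπC permContains_restrictBlock, hμ, rcPerm_restrictBlock hπ (by omega)⟩,
    rcSum_restrictBlock hπ hk hsplit hsplit'⟩

lemma rcCount_eq_sum_fin {C : ∀ n : ℕ, Set (Perm (Fin n))} (hC : IsPermClass C)
    (hsum : SumClosed C) (hrc : RCInvariant C) (n : ℕ) :
    rcCount C n = ∑ k : Fin (n + 1), classCount C (n - k) * indRcCount C k := by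
  let f : (Σ k : Fin (n + 1), C (n - k) × {μ ∈ C (2 * k) | SumIndecomposable μ ∧ rcPerm μ = μ})
      → {π ∈ C (2 * n) | rcPerm π = π} :=
    fun x => ⟨rcSum (Nat.lt_succ_iff.1 x.1.2) x.2.1 x.2.2,
      rcSum_mem _ hsum hrc x.2.1.2 x.2.2.2.1, rcPerm_rcSum _ _ x.2.2.2.2.2⟩
  have hf : f.Bijective := by
    constructor
    · rintro ⟨k, α, μ⟩ ⟨k', α', μ'⟩ h
      have h : rcSum (Nat.lt_succ_iff.1 k.2) α.1 μ.1 = rcSum (Nat.lt_succ_iff.1 k'.2) α'.1 μ'.1 :=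
        congrArg Subtype.val h
      obtain rfl : k = k' := Fin.ext <| le_antisymm
        (le_of_rcSum_eq _ _ _ _ μ.2.2.1 h.symm) (le_of_rcSum_eq _ _ _ _ μ'.2.2.1 h)
      obtain ⟨hα, hμ⟩ := rcSum_injective _ h
      rw [Subtype.ext hα, Subtype.ext hμ]
    · rintro ⟨π, hπC, hπ⟩
      obtain ⟨k, hk, α, hα, μ, hμ, rfl⟩ := exists_rcSum_eq hC hπC hπ
      exact ⟨⟨⟨k, Nat.lt_succ_of_le hk⟩, ⟨α, hα⟩, ⟨μ, hμ⟩⟩, rfl⟩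
  rw [rcCount, ← Nat.card_coe_set_eq, ← Nat.card_eq_of_bijective f hf, Nat.card_sigma]
  simp only [Nat.card_prod, Nat.card_coe_set_eq]
  rfl

lemma classCount_mul_indRcCount_zero {C : ∀ n : ℕ, Set (Perm (Fin n))} (hC : IsPermClass C)
    (n : ℕ) : classCount C n * indRcCount C 0 = classCount C n := by
  rcases (C n).eq_empty_or_nonempty with hCn | ⟨ρ, hρ⟩
  · simp [classCount, hCn]
  have h1 : (1 : Perm (Fin 0)) ∈ C 0 :=
    hC 0 n 1 ρ hρ ⟨Fin.elim0, fun i => i.elim0, fun i => i.elim0⟩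
  have hset : {π ∈ C (2 * 0) | SumIndecomposable π ∧ rcPerm π = π} = {1} := by
    refine Set.eq_singleton_iff_unique_mem.2 ⟨⟨h1, ?_, Equiv.ext fun i => i.elim0⟩,
      fun _ _ => Equiv.ext fun i => i.elim0⟩
    rintro ⟨a, b, -, -, hab, ha, -, -⟩
    omega
  rw [indRcCount, hset, Set.ncard_singleton, mul_one]

theorem stmt13 (C : ∀ n : ℕ, Set (Equiv.Perm (Fin n))) (hC : IsPermClass C)
    (hsum : SumClosed C) (hrc : RCInvariant C) (n : ℕ) :
    rcCount C n = classCount C n +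
      ∑ k ∈ Finset.Icc 1 n, classCount C (n - k) * indRcCount C k := by
  rw [rcCount_eq_sum_fin hC hsum hrc,
    Fin.sum_univ_eq_sum_range (fun k => classCount C (n - k) * indRcCount C k),
    ← Nat.Ico_zero_eq_range, Finset.sum_eq_sum_Ico_succ_bot (Nat.zero_lt_succ n),
    zero_add, Nat.succ_eq_add_one, Finset.Ico_add_one_right_eq_Icc, Nat.sub_zero,
    classCount_mul_indRcCount_zero hC]
end
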